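/- In the augmented Lagrangian iteration, the multiplier error satisfies λ^{k+1} - λ* = M(λ^k - λ*) where M = I - ε G(K + ε GᵀG)⁻¹Gᵀ, and the spectral radius of M is strictly less than 1 for any ε > 0 when K is symmetric positive definite and G has full row rank. -/

import Mathlib

/-!
The error recursion is a one-line computation from the optimality system `K u* + Gᵀ λ* = P`,
`G u* = 0`. For the spectral bound, the push-through (Woodbury) identity gives
`M = (1 + ε G K⁻¹ Gᵀ)⁻¹`; since `G` has independent rows, `ε G K⁻¹ Gᵀ` is positive definite, so
the symmetric matrix `M` has all its eigenvalues in `(0, 1)`, and a real symmetric matrix has no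
further complex eigenvalues.
-/

open Matrix
open scoped ComplexOrder

namespace Matrix

variable {m n : Type*} [Fintype m] [Fintype n]

theorem vecMul_injective_of_rank_eq_card {R : Type*} [Field R] {A : Matrix m n R}
    (hA : A.rank = Fintype.card m) : Function.Injective A.vecMul :=
  vecMul_injective_iff.mpr <| linearIndependent_iff_card_eq_finrank_span.mpr <| by
    rw [← hA, rank_eq_finrank_span_row]; rfl

variable [DecidableEq n]

section RCLike

variable {𝕜 : Type*} [RCLike 𝕜] {A : Matrix n n 𝕜}

theorem PosDef.pos_of_mem_spectrum_real (hA : A.PosDef) {r : ℝ} (hr : r ∈ spectrum ℝ A) :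
    0 < r := by
  obtain ⟨i, rfl⟩ := hA.isHermitian.spectrum_real_eq_range_eigenvalues ▸ hr
  exact hA.eigenvalues_pos i

theorem PosDef.spectrum_inv_one_add_subset_Ioo (hA : A.PosDef) :
    spectrum ℝ (1 + A)⁻¹ ⊆ Set.Ioo 0 1 := by
  intro r hr
  obtain ⟨u, hu⟩ : IsUnit (1 + A) := (PosDef.one.add hA).isUnit
  rw [← hu, ← coe_units_inv, ← spectrum.inv₀_mem_iff, hu, ← map_one (algebraMap ℝ _),
    ← spectrum.singleton_add_eq] at hr
  obtain ⟨_, rfl, s, hs, hrs⟩ := hr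
  exact one_lt_inv_iff₀.mp (hrs ▸ lt_add_of_pos_right 1 (hA.pos_of_mem_spectrum_real hs))

end RCLike

theorem IsHermitian.exists_mem_spectrum_real_of_mem_spectrum_map_ofReal {M : Matrix n n ℝ}
    (hM : M.IsHermitian) {μ : ℂ} (hμ : μ ∈ spectrum ℂ (M.map Complex.ofReal)) :
    ∃ r ∈ spectrum ℝ M, (r : ℂ) = μ := by
  have hN : (M.map Complex.ofReal).IsHermitian := hM.map _ fun x => by simp
  obtain ⟨r, ⟨i, rfl⟩, rfl⟩ := hN.spectrum_eq_image_range ▸ hμ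
  exact ⟨_, AlgHom.spectrum_apply_subset Complex.ofRealAm.mapMatrix M
    (hN.eigenvalues_mem_spectrum_real i), rfl⟩

variable [DecidableEq m] {R : Type*} [CommRing R]

theorem inv_one_add_smul_mul_inv_mul_eq {K : Matrix n n R} {G : Matrix m n R}
    {H : Matrix n m R} {ε : R} (hK : IsUnit K.det) (hA : IsUnit (K + ε • (H * G)).det) :
    (1 + ε • (G * K⁻¹ * H))⁻¹ = 1 - ε • (G * (K + ε • (H * G))⁻¹ * H) := by
  set A := K + ε • (H * G)
  refine inv_eq_right_inv ?_
  have key : G * K⁻¹ * H = G * A⁻¹ * H + ε • (G * K⁻¹ * H * (G * A⁻¹ * H)) :=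
    calc G * K⁻¹ * H = G * K⁻¹ * A * A⁻¹ * H := by
          rw [Matrix.mul_assoc (G * K⁻¹) A, mul_nonsing_inv _ hA, Matrix.mul_one]
      _ = _ := by
          simp only [A, Matrix.mul_add, Matrix.add_mul, Matrix.mul_smul, Matrix.smul_mul,
            Matrix.mul_assoc, nonsing_inv_mul_cancel_left _ _ hK]
  calc (1 + ε • (G * K⁻¹ * H)) * (1 - ε • (G * A⁻¹ * H))
      = 1 + ε • (G * K⁻¹ * H - (G * A⁻¹ * H + ε • (G * K⁻¹ * H * (G * A⁻¹ * H)))) := by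
        simp only [Matrix.add_mul, Matrix.mul_sub, Matrix.one_mul, Matrix.mul_one,
          Matrix.smul_mul, Matrix.mul_smul]
        module
    _ = 1 := by rw [← key, sub_self, smul_zero, add_zero]

theorem multiplier_error_eq_mulVec {A : Matrix n n R} (hA : IsUnit A.det) (G : Matrix m n R)
    (H : Matrix n m R) (ε : R) {P u ustar : n → R} {lam lamstar : m → R}
    (hu : u = A⁻¹ *ᵥ (P - H *ᵥ lam)) (hstar : A *ᵥ ustar + H *ᵥ lamstar = P)
    (hG : G *ᵥ ustar = 0) :
    lam + ε • G *ᵥ u - lamstar = (1 - ε • (G * A⁻¹ * H)) *ᵥ (lam - lamstar) := by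
  have hu' : u = ustar - A⁻¹ *ᵥ H *ᵥ (lam - lamstar) := by
    rw [hu, ← hstar, mulVec_sub H, add_sub_assoc, ← neg_sub, mulVec_add, mulVec_neg,
      mulVec_mulVec, nonsing_inv_mul _ hA, one_mulVec, ← sub_eq_add_neg]
  rw [hu', mulVec_sub, hG, sub_mulVec, one_mulVec, smul_mulVec, mulVec_mulVec, mulVec_mulVec,
    Matrix.mul_assoc]
  module

end Matrix

/-- In the augmented Lagrangian iteration the multiplier error satisfies
`λ^{k+1} - λ* = M (λ^k - λ*)` with `M = I - ε G (K + ε GᵀG)⁻¹ Gᵀ`, and the spectral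
radius of `M` is strictly less than `1` for any `ε > 0`. -/
theorem stmt_8 (n m : ℕ) (K : Matrix (Fin n) (Fin n) ℝ) (hK : K.PosDef)
    (G : Matrix (Fin m) (Fin n) ℝ) (hG : G.rank = m)
    (P : Fin n → ℝ) (ε : ℝ) (hε : 0 < ε)
    (u : ℕ → Fin n → ℝ) (lam : ℕ → Fin m → ℝ)
    (hu : ∀ k, u k = (K + ε • (Gᵀ * G))⁻¹.mulVec (P - Gᵀ.mulVec (lam k)))
    (hupd : ∀ k, lam (k + 1) = lam k + ε • G.mulVec (u k))
    (ustar : Fin n → ℝ) (lamstar : Fin m → ℝ)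
    (hsys₁ : K.mulVec ustar + Gᵀ.mulVec lamstar = P)
    (hsys₂ : G.mulVec ustar = 0)
    (M : Matrix (Fin m) (Fin m) ℝ)
    (hM : M = 1 - ε • (G * (K + ε • (Gᵀ * G))⁻¹ * Gᵀ)) :
    (∀ k, lam (k + 1) - lamstar = M.mulVec (lam k - lamstar)) ∧
    (∀ μ ∈ spectrum ℂ (M.map (Complex.ofReal)), ‖μ‖ < 1) := by
  have hA : (K + ε • (Gᵀ * G)).PosDef :=
    hK.add_posSemidef ((posSemidef_conjTranspose_mul_self G).smul hε.le)
  have hstar : (K + ε • (Gᵀ * G)) *ᵥ ustar + Gᵀ *ᵥ lamstar = P := by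
    rw [add_mulVec, smul_mulVec, ← mulVec_mulVec, hsys₂, mulVec_zero, smul_zero, add_zero, hsys₁]
  have hS : (ε • (G * K⁻¹ * Gᵀ)).PosDef :=
    (hK.inv.mul_mul_conjTranspose_same
      (vecMul_injective_of_rank_eq_card (by rwa [Fintype.card_fin]))).smul hε
  have hMinv : M = (1 + ε • (G * K⁻¹ * Gᵀ))⁻¹ := by
    rw [hM, inv_one_add_smul_mul_inv_mul_eq hK.det_pos.ne'.isUnit
      hA.det_pos.ne'.isUnit]
  refine ⟨fun k => ?_, fun μ hμ => ?_⟩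
  · rw [hupd k, hM]
    exact multiplier_error_eq_mulVec hA.det_pos.ne'.isUnit G Gᵀ ε (hu k) hstar hsys₂
  · have hMherm : M.IsHermitian := hMinv ▸ (PosDef.one.add hS).inv.isHermitian
    obtain ⟨r, hr, rfl⟩ := hMherm.exists_mem_spectrum_real_of_mem_spectrum_map_ofReal hμ
    obtain ⟨hr₀, hr₁⟩ := hS.spectrum_inv_one_add_subset_Ioo (hMinv ▸ hr)
    rwa [Complex.norm_real, Real.norm_of_nonneg hr₀.le]
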